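/- Let f : ℝ² → ℝ be differentiable and nowhere zero, and let a : ℝ² → ℝ satisfy f(p)·(∂f/∂p_i)(p) = −a(p)·p_i for i = 1,2 and all p ∈ ℝ². Define J : ℝ² × ℝ² → ℝ by J(q,p) = (q₁p₂ − q₂p₁)/f(p), and at each point x = (q,p) define the vector ρ(x) = (q₂, −q₁, p₂, −p₁) ∈ ℝ⁴ and the 4×4 matrix Ω(x) = (1/f(p)) · [[0,0,−1,0],[0,0,0,−1],[1,0,0,(a(p)/f(p))·J(x)],[0,1,−(a(p)/f(p))·J(x),0]]. Then for every x ∈ ℝ² × ℝ² and every w ∈ ℝ⁴, the Fréchet derivative of J satisfies DJ(x)(w) = ρ(x)ᵀ · Ω(x) · w. That is, the interior product of the infinitesimal rotation vector field with the deformed symplectic form equals dJ, so J is a momentum map for the SO(2)-action. -/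

import Mathlib

open Matrix

/-- Deformed angular momentum `J(q,p) = (q₁p₂ − q₂p₁)/f(p)` on the phase space `ℝ⁴` with
coordinates `(q₁,q₂,p₁,p₂)`. -/
noncomputable def J2fun (f : (Fin 2 → ℝ) → ℝ) (x : Fin 4 → ℝ) : ℝ :=
  (x 0 * x 3 - x 1 * x 2) / f ![x 2, x 3]

/-- Matrix of the deformed symplectic form of the two-dimensional rotationally invariant GUP
theory in the coordinates `(q₁,q₂,p₁,p₂)`. -/
noncomputable def Omega2 (f a : (Fin 2 → ℝ) → ℝ) (x : Fin 4 → ℝ) : Matrix (Fin 4) (Fin 4) ℝ :=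
  (f ![x 2, x 3])⁻¹ •
    !![0, 0, -1, 0;
       0, 0, 0, -1;
       1, 0, 0, (a ![x 2, x 3] / f ![x 2, x 3]) * J2fun f x;
       0, 1, -((a ![x 2, x 3] / f ![x 2, x 3]) * J2fun f x), 0]

/-- Generator `ρ = q₂∂_{q₁} − q₁∂_{q₂} + p₂∂_{p₁} − p₁∂_{p₂}` of the diagonal
`SO(2)`-action on the phase space `ℝ⁴`. -/
def rho2 (x : Fin 4 → ℝ) : Fin 4 → ℝ := ![x 1, -x 0, x 3, -x 2]

/-!
Since `J = (q₁p₂ − q₂p₁)/f(p)`, the quotient rule gives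
`dJ = d(q₁p₂ − q₂p₁)/f − (q₁p₂ − q₂p₁)·df/f²`. The closure condition says exactly that
`df(p) = −(a/f)·⟨p, ·⟩`, so the second term becomes `(1/f)·(a/f)·J·⟨p, dp⟩`: this is what the
`J`-dependent entries of `Ω` produce when contracted with `ρ`, while its constant entries
produce `d(q₁p₂ − q₂p₁)/f`.
-/

theorem HasFDerivAt.div {𝕜 E : Type*} [NontriviallyNormedField 𝕜] [NormedAddCommGroup E]
    [NormedSpace 𝕜 E] {c d : E → 𝕜} {c' d' : E →L[𝕜] 𝕜} {x : E}
    (hc : HasFDerivAt c c' x) (hd : HasFDerivAt d d' x) (hx : d x ≠ 0) :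
    HasFDerivAt (fun y => c y / d y) ((d x)⁻¹ • c' - (c x / d x ^ 2) • d') x := by
  have h := hc.fun_mul ((hasDerivAt_inv hx).comp_hasFDerivAt x hd)
  simp only [Function.comp_apply, ← div_eq_mul_inv] at h
  refine h.congr_fderiv ?_
  ext v
  simp only [_root_.add_apply, _root_.sub_apply, _root_.smul_apply, smul_eq_mul]
  ring

theorem fderiv_apply_eq_of_closure {n : ℕ} {f a : (Fin n → ℝ) → ℝ} {p : Fin n → ℝ}
    (hp : f p ≠ 0) (hfa : ∀ i, f p * fderiv ℝ f p (Pi.single i 1) = -(a p * p i))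
    (u : Fin n → ℝ) : fderiv ℝ f p u = -(a p / f p) * (p ⬝ᵥ u) := by
  have hpartial : ∀ i, fderiv ℝ f p (Pi.single i 1) = -(a p / f p) * p i := fun i => by
    field_simp
    linear_combination hfa i
  conv_lhs => rw [pi_eq_sum_univ' u]
  simp only [map_sum, map_smul, hpartial, smul_eq_mul, dotProduct, Finset.mul_sum]
  exact Finset.sum_congr rfl fun i _ => by ring

def momentumProj : (Fin 4 → ℝ) →L[ℝ] (Fin 2 → ℝ) :=
  ContinuousLinearMap.pi ![ContinuousLinearMap.proj 2, ContinuousLinearMap.proj 3]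

theorem momentumProj_apply (x : Fin 4 → ℝ) : momentumProj x = ![x 2, x 3] := by
  ext i; fin_cases i <;> rfl

theorem fderiv_J2fun_apply {f : (Fin 2 → ℝ) → ℝ} {x : Fin 4 → ℝ}
    (hf : DifferentiableAt ℝ f ![x 2, x 3]) (hf0 : f ![x 2, x 3] ≠ 0) (w : Fin 4 → ℝ) :
    fderiv ℝ (J2fun f) x w =
      (x 0 * w 3 - x 1 * w 2 + x 3 * w 0 - x 2 * w 1) / f ![x 2, x 3]
        - (x 0 * x 3 - x 1 * x 2) / f ![x 2, x 3] ^ 2 * fderiv ℝ f ![x 2, x 3] ![w 2, w 3] := by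
  have hproj (i : Fin 4) :
      HasFDerivAt (fun y : Fin 4 → ℝ => y i) (ContinuousLinearMap.proj (R := ℝ) i) x :=
    hasFDerivAt_apply i x
  have hnum := ((hproj 0).fun_mul (hproj 3)).fun_sub ((hproj 1).fun_mul (hproj 2))
  have hden : HasFDerivAt (fun y : Fin 4 → ℝ => f ![y 2, y 3])
      ((fderiv ℝ f ![x 2, x 3]).comp momentumProj) x := by
    rw [← momentumProj_apply] at hf
    simpa only [Function.comp_def, momentumProj_apply] using
      hf.hasFDerivAt.comp x momentumProj.hasFDerivAt
  have hJ : HasFDerivAt (J2fun f) _ x := hnum.div hden hf0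
  rw [hJ.fderiv]
  simp only [_root_.sub_apply, _root_.add_apply, _root_.smul_apply, smul_eq_mul,
    ContinuousLinearMap.comp_apply, ContinuousLinearMap.proj_apply, momentumProj_apply]
  ring

theorem rho2_dotProduct_Omega2_mulVec (f a : (Fin 2 → ℝ) → ℝ) (x w : Fin 4 → ℝ) :
    rho2 x ⬝ᵥ (Omega2 f a x).mulVec w =
      (f ![x 2, x 3])⁻¹ * (x 0 * w 3 - x 1 * w 2 + x 3 * w 0 - x 2 * w 1
        + a ![x 2, x 3] / f ![x 2, x 3] * J2fun f x * (x 2 * w 2 + x 3 * w 3)) := by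
  simp only [dotProduct, rho2, mulVec, Omega2, Matrix.smul_apply, of_apply, cons_val',
    cons_val_fin_one, smul_eq_mul, Fin.sum_univ_four, cons_val_zero, cons_val_one, cons_val]
  ring

theorem stmt_12 (f : (Fin 2 → ℝ) → ℝ) (hf : Differentiable ℝ f)
    (hf0 : ∀ p, f p ≠ 0) (a : (Fin 2 → ℝ) → ℝ)
    (hfa : ∀ (p : Fin 2 → ℝ) (i : Fin 2),
      f p * fderiv ℝ f p (Pi.single i 1) = -(a p * p i)) :
    ∀ x w : Fin 4 → ℝ,
      fderiv ℝ (J2fun f) x w = rho2 x ⬝ᵥ (Omega2 f a x).mulVec w := by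
  intro x w
  have hp := hf0 ![x 2, x 3]
  rw [fderiv_J2fun_apply (hf _) hp, fderiv_apply_eq_of_closure hp (hfa _),
    rho2_dotProduct_Omega2_mulVec]
  simp only [J2fun, dotProduct, Fin.sum_univ_two, Matrix.cons_val_zero, Matrix.cons_val_one]
  field_simp
  ring
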